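/- arXiv:1712.01601 — 2 statements merged into one kernel-verified Lean document; each statement's English description precedes it below -/
import Mathlib

section
/- Let λ_n be the ladder trees in the Connes–Kreimer Hopf algebra H of rooted forests over ℚ, with antipode S and grading operator Y (Y(f) = deg(f)·f where deg counts vertices). Define the Dynkin operator D = m∘(S ⊗ Y)∘Δ. Then for all n ≥ 1: D(λ_n) = n · Σ_{d=1}^{n} ((-1)^{d+1}/d) Σ_{m_1+⋯+m_d=n, m_i≥1} λ_{m_1}⋯λ_{m_d}. -/
/-!
Put `L = ∑ λₙ xⁿ` in `H⟦x⟧` and `A = L - 1`. Because the coproduct of a ladder is a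
convolution, the counit and antipode axioms become `ε(L) · L = L` and `S(L) · L = ε(L)`, so
`S(L) = L⁻¹ ≡ ∑_{e < n} (-A)ᵉ` modulo `xⁿ`, and `D(λₙ)` is the coefficient of `xⁿ` in
`S(L) · x L' = x (log L)'`. Expanding `log L = log (1 + A)` and multiplying the `xⁿ`-coefficient
by `n` gives the formula, since the `xⁿ`-coefficient of `Aᵈ` is the sum over compositions of `n`
into `d` parts.
-/

open TensorProduct Finset

/-- Sum over compositions of `n` into `d` (ordered) positive parts of the
products `λ_{m₁} ⋯ λ_{m_d}`. -/
def compSum {R : Type*} [Ring R] (a : ℕ → R) (n d : ℕ) : R :=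
  ∑ c ∈ Finset.univ.filter (fun c : Composition n => c.length = d),
    (c.blocks.map a).prod

open PowerSeries

theorem Composition.tail_sum_lt {n : ℕ} (c : Composition n) (h : c.length ≠ 0) :
    c.blocks.tail.sum < n := by
  obtain ⟨_ | ⟨k, l⟩, hpos, rfl⟩ := c
  · exact absurd rfl h
  · have : 0 < k := hpos List.mem_cons_self
    simp only [List.tail_cons, List.sum_cons]
    omega

theorem Composition.blocks_eq_cons_tail {n : ℕ} (c : Composition n) (h : c.length ≠ 0) :
    c.blocks = (n - c.blocks.tail.sum) :: c.blocks.tail := by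
  obtain ⟨_ | ⟨k, l⟩, hpos, rfl⟩ := c
  · exact absurd rfl h
  · simp

section compSum

variable {R : Type*} [CommRing R]

theorem compSum_zero (a : ℕ → R) (n : ℕ) : compSum a n 0 = if n = 0 then 1 else 0 := by
  split_ifs with hn
  · subst hn
    rw [compSum, sum_eq_single_of_mem (Composition.ones 0) (by simp)]
    · simp [Composition.ones]
    · intro c _ hc
      exact absurd (Composition.eq_ones_iff_length.2 (c.length_eq_zero.2 rfl)) hc
  · refine sum_eq_zero fun c hc => absurd (mem_filter.1 hc).2 ?_
    exact fun h => hn (c.length_eq_zero.1 h)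

theorem compSum_succ (a : ℕ → R) (n d : ℕ) :
    compSum a n (d + 1) = ∑ j ∈ range n, compSum a j d * a (n - j) := by
  simp only [compSum, sum_mul]
  rw [sum_sigma']
  refine sum_bij' (fun c _ => ⟨c.blocks.tail.sum, ⟨c.blocks.tail,
      fun h => c.blocks_pos (List.mem_of_mem_tail h), rfl⟩⟩)
    (fun p hp => ⟨(n - p.1) :: p.2.blocks, ?_, ?_⟩) ?_ ?_ ?_ ?_ ?_
  · simp only [mem_sigma, mem_range] at hp
    intro k hk
    rcases List.mem_cons.1 hk with rfl | hk
    · omega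
    · exact p.2.blocks_pos hk
  · simp only [mem_sigma, mem_range] at hp
    simp only [List.sum_cons, p.2.blocks_sum]
    omega
  · intro c hc
    simp only [mem_filter, mem_univ, true_and, mem_sigma, mem_range] at hc ⊢
    exact ⟨c.tail_sum_lt (by omega), by simp [Composition.length, hc]⟩
  · intro p hp
    simp only [mem_filter, mem_univ, true_and, mem_sigma, mem_range] at hp ⊢
    simp [Composition.length, hp.2]
  · intro c hc
    simp only [mem_filter, mem_univ, true_and] at hc
    exact Composition.ext (c.blocks_eq_cons_tail (by omega)).symm
  · intro p _
    exact Composition.sigma_eq_iff_blocks_eq.2 rfl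
  · intro c hc
    simp only [mem_filter, mem_univ, true_and] at hc
    conv_lhs => rw [(c.blocks_eq_cons_tail (by omega))]
    rw [List.map_cons, List.prod_cons, mul_comm]

theorem compSum_congr {a b : ℕ → R} (h : ∀ k, 0 < k → a k = b k) (n d : ℕ) :
    compSum a n d = compSum b n d :=
  sum_congr rfl fun c _ =>
    congrArg List.prod <| List.map_congr_left fun k hk => h k (c.blocks_pos hk)

theorem PowerSeries.coeff_pow_eq_compSum {A : R⟦X⟧} (hA : constantCoeff A = 0) (n d : ℕ) :
    coeff n (A ^ d) = compSum (fun k => coeff k A) n d := by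
  induction d generalizing n with
  | zero => rw [pow_zero, coeff_one, compSum_zero]
  | succ d ih =>
    rw [pow_succ, coeff_mul,
      Nat.sum_antidiagonal_eq_sum_range_succ (fun i j => coeff i (A ^ d) * coeff j A),
      sum_range_succ, Nat.sub_self, coeff_zero_eq_constantCoeff_apply, hA, mul_zero, add_zero,
      compSum_succ]
    simp only [ih]

end compSum

namespace PowerSeries

section CommSemiring

variable {R : Type*} [CommSemiring R]

theorem coeff_mk_mul_mk (f g : ℕ → R) (n : ℕ) :
    coeff n (mk f * mk g) = ∑ j ∈ range (n + 1), f j * g (n - j) := by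
  rw [coeff_mul,
    Nat.sum_antidiagonal_eq_sum_range_succ (fun i j => coeff i (mk f) * coeff j (mk g))]
  simp only [coeff_mk]

theorem coeff_X_mul_derivative (f : R⟦X⟧) (n : ℕ) :
    coeff n (X * d⁄dX R f) = n • coeff n f := by
  cases n with
  | zero => simp
  | succ n => rw [coeff_succ_X_mul, coeff_derivative, nsmul_eq_mul, mul_comm]; push_cast; rfl

end CommSemiring

section CommRing

variable {R : Type*} [CommRing R]

theorem X_pow_dvd_sub_geom_sum {T A : R⟦X⟧} (hA : constantCoeff A = 0) (hT : T * (1 + A) = 1)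
    (n : ℕ) : X ^ n ∣ T - ∑ e ∈ range n, (-A) ^ e := by
  set G := ∑ e ∈ range n, (-A) ^ e
  have hTG : T - G = (-A) ^ n * T :=
    calc T - G = T - G * (1 - -A) * T := by
          rw [sub_neg_eq_add, mul_assoc, mul_comm _ T, hT, mul_one]
      _ = (-A) ^ n * T := by rw [geom_sum_mul_neg]; ring
  rw [hTG]
  exact (pow_dvd_pow_of_dvd (dvd_neg.2 (X_dvd_iff.2 hA)) n).mul_right T

theorem coeff_mul_X_mul_eq_geom_sum {T A : R⟦X⟧} (hA : constantCoeff A = 0)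
    (hT : T * (1 + A) = 1) (n : ℕ) (B : R⟦X⟧) :
    coeff n (T * (X * B)) = coeff n ((∑ e ∈ range n, (-A) ^ e) * (X * B)) := by
  rw [← sub_eq_zero, ← map_sub, ← sub_mul]
  have h : X ^ (n + 1) ∣ (T - ∑ e ∈ range n, (-A) ^ e) * (X * B) :=
    pow_succ (X : R⟦X⟧) n ▸ mul_dvd_mul (X_pow_dvd_sub_geom_sum hA hT n) (dvd_mul_right X B)
  exact X_pow_dvd_iff.1 h n n.lt_succ_self

/-- The truncation of `log (1 + A)` at degree `n`, differentiated. -/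
theorem derivative_sum_smul_pow_eq_geom_sum_mul [Algebra ℚ R] (A : R⟦X⟧) (n : ℕ) :
    d⁄dX R (∑ d ∈ Icc 1 n, ((-1 : ℚ) ^ (d + 1) / d) • A ^ d) =
      (∑ e ∈ range n, (-A) ^ e) * d⁄dX R A := by
  induction n with
  | zero => simp
  | succ n ih =>
    rw [sum_Icc_succ_top (by omega), map_add, ih, sum_range_succ, add_mul,
      Derivation.map_smul_of_tower, derivative_pow]
    congr 1
    have hc : (-1 : ℚ) ^ (n + 1 + 1) / ↑(n + 1) * ↑(n + 1) = (-1) ^ n := by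
      field_simp
      ring
    rw [mul_assoc, Nat.add_sub_cancel, ← nsmul_eq_mul, ← Nat.cast_smul_eq_nsmul ℚ, smul_smul, hc,
      neg_pow A, mul_assoc, Algebra.smul_def, map_pow, map_neg, map_one]

end CommRing

end PowerSeries

section Ladder

variable {R H : Type*} [CommSemiring R] [CommRing H] [HopfAlgebra R H] {lam : ℕ → H}

theorem mk_algebraMap_counit_mul_mk
    (hΔ : ∀ n, Coalgebra.comul (R := R) (lam n) =
      ∑ j ∈ range (n + 1), lam j ⊗ₜ[R] lam (n - j)) :
    mk (fun j => algebraMap R H (Coalgebra.counit (lam j))) * mk lam = mk lam := by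
  ext n
  have h := congrArg (TensorProduct.lid R H) (Coalgebra.rTensor_counit_comul (R := R) (lam n))
  rw [hΔ, map_sum, map_sum] at h
  simpa [coeff_mk_mul_mk, ← Algebra.smul_def] using h

theorem mk_antipode_mul_mk
    (hΔ : ∀ n, Coalgebra.comul (R := R) (lam n) =
      ∑ j ∈ range (n + 1), lam j ⊗ₜ[R] lam (n - j)) :
    mk (fun j => HopfAlgebra.antipode R (lam j)) * mk lam =
      mk (fun j => algebraMap R H (Coalgebra.counit (lam j))) := by
  ext n
  have h := HopfAlgebra.mul_antipode_rTensor_comul_apply (R := R) (lam n)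
  rw [hΔ, map_sum, map_sum] at h
  simpa [coeff_mk_mul_mk] using h

theorem mk_antipode_mul_mk_eq_one
    (hΔ : ∀ n, Coalgebra.comul (R := R) (lam n) =
      ∑ j ∈ range (n + 1), lam j ⊗ₜ[R] lam (n - j))
    (hlam0 : lam 0 = 1) :
    mk (fun j => HopfAlgebra.antipode R (lam j)) * mk lam = 1 := by
  have hL : IsUnit (mk lam) := isUnit_iff_constantCoeff.2 (by simp [hlam0])
  rw [mk_antipode_mul_mk hΔ, ← hL.mul_left_inj, mk_algebraMap_counit_mul_mk hΔ, one_mul]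

theorem mul'_map_antipode_comul_eq_coeff
    (hΔ : ∀ n, Coalgebra.comul (R := R) (lam n) =
      ∑ j ∈ range (n + 1), lam j ⊗ₜ[R] lam (n - j))
    {Y : H →ₗ[R] H} (hY : ∀ j : ℕ, Y (lam j) = (j : R) • lam j) (n : ℕ) :
    LinearMap.mul' R H (TensorProduct.map (HopfAlgebra.antipode R) Y (Coalgebra.comul (lam n))) =
      coeff n (mk (fun j => HopfAlgebra.antipode R (lam j)) * (X * d⁄dX H (mk lam))) := by
  rw [hΔ, map_sum, map_sum, coeff_mul,
    Nat.sum_antidiagonal_eq_sum_range_succ (fun i j => coeff i _ * coeff j _)]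
  refine sum_congr rfl fun j _ => ?_
  rw [map_tmul, LinearMap.mul'_apply, hY, coeff_X_mul_derivative, coeff_mk, coeff_mk,
    Nat.cast_smul_eq_nsmul]

end Ladder

theorem dynkin_ladder_general
    (H : Type*) [CommRing H] [HopfAlgebra ℚ H]
    (lam : ℕ → H) (hlam0 : lam 0 = 1)
    (hΔ : ∀ n : ℕ, Coalgebra.comul (lam n) =
      ∑ j ∈ Finset.range (n + 1), lam j ⊗ₜ[ℚ] lam (n - j))
    (Y : H →ₗ[ℚ] H) (hY : ∀ j : ℕ, Y (lam j) = (j : ℚ) • lam j)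
    (D : H → H)
    (hD : ∀ f : H, D f = LinearMap.mul' ℚ H
      ((TensorProduct.map (HopfAlgebra.antipode (R := ℚ)) Y) (Coalgebra.comul f)))
    (n : ℕ) :
    D (lam n) = (n : ℚ) •
      ∑ d ∈ Finset.Icc 1 n, (((-1 : ℚ) ^ (d + 1)) / d) • compSum lam n d := by
  set A : H⟦X⟧ := mk lam - 1 with hA_def
  set T : H⟦X⟧ := mk fun j => HopfAlgebra.antipode ℚ (lam j)
  have hA : constantCoeff A = 0 := by simp [A, hlam0]
  have hT : T * (1 + A) = 1 := by
    rw [hA_def, add_sub_cancel]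
    exact mk_antipode_mul_mk_eq_one hΔ hlam0
  have hcoeffA : ∀ k, 0 < k → coeff k A = lam k := fun k hk => by simp [A, coeff_one, hk.ne']
  have hdA : d⁄dX H (mk lam) = d⁄dX H A := by rw [hA_def, map_sub, derivative_one, sub_zero]
  calc D (lam n) = coeff n (T * (X * d⁄dX H A)) := by
        rw [hD, mul'_map_antipode_comul_eq_coeff hΔ hY, hdA]
    _ = coeff n ((∑ e ∈ range n, (-A) ^ e) * (X * d⁄dX H A)) :=
        coeff_mul_X_mul_eq_geom_sum hA hT n _
    _ = coeff n (X * d⁄dX H (∑ d ∈ Icc 1 n, ((-1 : ℚ) ^ (d + 1) / d) • A ^ d)) := by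
        rw [derivative_sum_smul_pow_eq_geom_sum_mul, mul_left_comm]
    _ = _ := by
        rw [coeff_X_mul_derivative, map_sum, Nat.cast_smul_eq_nsmul]
        simp only [coeff_smul, coeff_pow_eq_compSum hA, compSum_congr hcoeffA]

/-- **Dynkin operator on ladder trees.**
Let `H` be the Connes–Kreimer Hopf algebra of rooted forests over `ℚ` (a
commutative Hopf algebra), `λₙ` the ladder trees with
`Δ(λₙ) = ∑_{j=0}^n λⱼ ⊗ λ_{n-j}`, `S` the antipode, and `Y` the grading
operator (`Y(λⱼ) = j·λⱼ`).  With `D = m ∘ (S ⊗ Y) ∘ Δ` the Dynkin operator,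
for all `n ≥ 1`:
`D(λₙ) = n · ∑_{d=1}^n ((-1)^{d+1}/d) ∑_{m₁+⋯+m_d=n, mᵢ≥1} λ_{m₁}⋯λ_{m_d}`. -/
theorem dynkin_ladder
    (H : Type*) [CommRing H] [HopfAlgebra ℚ H]
    (lam : ℕ → H) (hlam0 : lam 0 = 1)
    (hΔ : ∀ n : ℕ, Coalgebra.comul (lam n) =
      ∑ j ∈ Finset.range (n + 1), lam j ⊗ₜ[ℚ] lam (n - j))
    (Y : H →ₗ[ℚ] H) (hY : ∀ j : ℕ, Y (lam j) = (j : ℚ) • lam j)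
    (D : H → H)
    (hD : ∀ f : H, D f = LinearMap.mul' ℚ H
      ((TensorProduct.map (HopfAlgebra.antipode (R := ℚ)) Y) (Coalgebra.comul f)))
    (n : ℕ) (hn : 1 ≤ n) :
    D (lam n) = (n : ℚ) •
      ∑ d ∈ Finset.Icc 1 n, (((-1 : ℚ) ^ (d + 1)) / d) • compSum lam n d :=
  dynkin_ladder_general H lam hlam0 hΔ Y hY D hD n
end

section
/- Let ℌ = ℚ⟨x,y⟩ and define for n ≥ 1 the derivation ∂_n on ℌ (with respect to concatenation) by ∂_n(x) = x(x+y)^{n-1}y and ∂_n(y) = -x(x+y)^{n-1}y. In ℌ[[u]], exp(Σ_{n≥1} (2^n - 1)·(∂_n(x)/n)·u^n) = x + x·u·(1-(x+2y)u)^{-1}·y, where the exponential is interpreted as: the ℚ[[u]]-algebra map Δ_{-2u}∘Δ_{-u}^{-1} applied to x, using the identity Δ_u = exp(Σ_{n≥1} (-1)^n (∂_n/n) u^n). Concretely: applying the operator exponential exp(Σ_{n≥1} (2^n-1)(∂_n/n)u^n) to x yields x + Σ_{n≥1} x(x+2y)^{n-1}y·u^n. -/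
/-!
Let `D = ∑ₘ (2ᵐ - 1)/m ∂ₘ uᵐ` act coefficientwise on `ℌ⟦u⟧` and put `z = x + y`. Every `∂ₘ`
kills `z`, and `D x = x G y` with `G = ∑ₘ (2ᵐ - 1)/m zᵐ⁻¹ uᵐ`. Writing `Dᵏ x / k! = x Tₖ`, the
Riccati-type relation `D (G y) = (G y - G z) G y` gives
`Tₖ₊₁ = ∑_{i+j=k} (-G z)ⁱ/(i+1)! · G y · Tⱼ`, so that `W = ∑ₖ Tₖ` satisfies
`W = 1 + φ(-G z) G y W` with `φ(t) = (eᵗ - 1)/t`. As `G z = log ((1 - zu)/(1 - 2zu))`, we get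
`e^{-G z} = (1 - 2zu)/(1 - zu)` and `φ(-G z) G = u/(1 - zu)`; the equation
`W = 1 + u (1 - zu)⁻¹ y W` then forces the coefficients `(z + y)ⁿ⁻¹ y` of `W` for `n ≥ 1`.
-/

open Finset

/-- The letter `x` in `ℌ = ℚ⟨x,y⟩`. -/
noncomputable def Hx : FreeAlgebra ℚ (Fin 2) := FreeAlgebra.ι ℚ 0

/-- The letter `y` in `ℌ = ℚ⟨x,y⟩`. -/
noncomputable def Hy : FreeAlgebra ℚ (Fin 2) := FreeAlgebra.ι ℚ 1

open PowerSeries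

theorem Finset.sum_range_sum_antidiagonal {M : Type*} [AddCommMonoid M] {n : ℕ}
    {f : ℕ → ℕ → M} (hf : ∀ i j, n < i + j → f i j = 0) :
    ∑ k ∈ range (n + 1), ∑ p ∈ antidiagonal k, f p.1 p.2 =
      ∑ i ∈ range (n + 1), ∑ j ∈ range (n + 1), f i j := by
  simp only [Nat.sum_antidiagonal_eq_sum_range_succ f, sum_range_diag_flip]
  refine sum_congr rfl fun i hi => sum_subset (range_subset_range.2 (by omega)) ?_
  intro j hj hj'
  simp only [mem_range] at hi hj hj'
  exact hf i j (by omega)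

noncomputable def compositionBlocks (n : ℕ) : Finset (List ℕ) :=
  (univ : Finset (Composition n)).map ⟨Composition.blocks, fun _ _ => Composition.ext⟩

theorem mem_compositionBlocks {n : ℕ} {L : List ℕ} :
    L ∈ compositionBlocks n ↔ (∀ i ∈ L, 0 < i) ∧ L.sum = n := by
  simp only [compositionBlocks, mem_map, mem_univ, true_and]
  exact ⟨by rintro ⟨c, rfl⟩; exact ⟨fun i => c.blocks_pos, c.blocks_sum⟩,
    fun ⟨hpos, hsum⟩ => ⟨⟨L, hpos _, hsum⟩, rfl⟩⟩

namespace PowerSeries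

theorem le_order_X_pow_mul {R : Type*} [Semiring R] (φ : R⟦X⟧) (m : ℕ) :
    (m : ℕ∞) ≤ (X ^ m * φ).order :=
  nat_le_order _ _ fun i hi => by rw [coeff_X_pow_mul', if_neg (by omega)]

theorem le_order_smul_of_algebra {K R : Type*} [CommSemiring K] [Semiring R] [Algebra K R]
    (c : K) (φ : R⟦X⟧) : φ.order ≤ (c • φ).order := by
  rw [← algebraMap_smul R c φ]
  exact le_order_smul

section FamilySum

variable {R : Type*} [Semiring R]

/-- `∑ₖ F k`, for a family with `F k` of order at least `k`: the `n`-th coefficient is cut off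
at `k ≤ n`, which is a junk value without that order condition. -/
noncomputable def familySum (F : ℕ → R⟦X⟧) : R⟦X⟧ :=
  mk fun n => ∑ k ∈ range (n + 1), coeff n (F k)

theorem coeff_familySum (F : ℕ → R⟦X⟧) (n : ℕ) :
    coeff n (familySum F) = ∑ k ∈ range (n + 1), coeff n (F k) :=
  coeff_mk _ _

variable {F G : ℕ → R⟦X⟧}

theorem coeff_familySum_of_le (hF : ∀ k : ℕ, ↑k ≤ (F k).order) {n N : ℕ} (h : n ≤ N) :
    coeff n (familySum F) = ∑ k ∈ range (N + 1), coeff n (F k) := by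
  rw [coeff_familySum]
  refine sum_subset (range_subset_range.2 (by omega)) fun k _ hk => coeff_of_lt_order _ ?_
  exact lt_of_lt_of_le (by simp at hk; exact_mod_cast hk) (hF k)

theorem familySum_add : familySum (F + G) = familySum F + familySum G := by
  ext n
  simp [coeff_familySum, sum_add_distrib]

theorem familySum_mul_right (hF : ∀ k : ℕ, ↑k ≤ (F k).order) (g : R⟦X⟧) :
    familySum F * g = familySum fun k => F k * g := by
  ext n
  simp only [coeff_mul, coeff_familySum]
  rw [sum_comm]
  refine sum_congr rfl fun p hp => ?_
  rw [← coeff_familySum,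
    coeff_familySum_of_le hF (N := n) (HasAntidiagonal.antidiagonal.fst_le hp), sum_mul]

theorem familySum_mul_left (hG : ∀ k : ℕ, ↑k ≤ (G k).order) (f : R⟦X⟧) :
    f * familySum G = familySum fun k => f * G k := by
  ext n
  simp only [coeff_mul, coeff_familySum]
  rw [sum_comm]
  refine sum_congr rfl fun p hp => ?_
  rw [← coeff_familySum,
    coeff_familySum_of_le hG (N := n) (HasAntidiagonal.antidiagonal.snd_le hp), mul_sum]

theorem familySum_mul (hF : ∀ k : ℕ, ↑k ≤ (F k).order) (hG : ∀ k : ℕ, ↑k ≤ (G k).order) :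
    familySum F * familySum G = familySum fun k => ∑ p ∈ antidiagonal k, F p.1 * G p.2 := by
  ext n
  have hFG : ∀ i j, n < i + j → coeff n (F i * G j) = 0 := fun i j h =>
    coeff_of_lt_order _ <| lt_of_lt_of_le (by exact_mod_cast h)
      ((add_le_add (hF i) (hG j)).trans (le_order_mul _ _))
  rw [familySum_mul_right hF, coeff_familySum, coeff_familySum]
  simp only [familySum_mul_left hG, coeff_familySum, map_sum]
  rw [sum_range_sum_antidiagonal hFG]

theorem familySum_eq_add_familySum_succ (hF : ∀ k : ℕ, ↑k ≤ (F k).order) :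
    familySum F = F 0 + familySum fun k => F (k + 1) := by
  ext n
  rw [map_add, coeff_familySum_of_le hF (N := n + 1) n.le_succ, sum_range_succ', add_comm,
    coeff_familySum]

end FamilySum

theorem subst_eq_familySum {S : Type*} [CommRing S] (f : S⟦X⟧) {g : S⟦X⟧}
    (hg : constantCoeff g = 0) : f.subst g = familySum fun k => coeff k f • g ^ k := by
  ext n
  rw [coeff_subst' (HasSubst.of_constantCoeff_zero' hg), coeff_familySum]
  simp only [coeff_smul]
  refine finsum_eq_sum_of_support_subset _ fun k hk => ?_
  by_contra hkn
  refine hk (smul_eq_zero_of_right _ (coeff_of_lt_order _ ?_))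
  refine lt_of_lt_of_le ?_ (le_order_pow_of_constantCoeff_eq_zero k hg)
  simp at hkn
  exact_mod_cast hkn

section RescaleAlg

variable {K R : Type*} [CommSemiring K] [Semiring R] [Algebra K R]

/-- The substitution `X ↦ a X`, from `K⟦X⟧` into `R⟦X⟧`. -/
noncomputable def rescaleAlg (a : R) : K⟦X⟧ →+* R⟦X⟧ :=
  (map (Polynomial.aeval a).toRingHom).comp ((rescale Polynomial.X).comp (map Polynomial.C))

theorem coeff_rescaleAlg (a : R) (f : K⟦X⟧) (n : ℕ) :
    coeff n (rescaleAlg a f) = coeff n f • a ^ n := by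
  simp [rescaleAlg, coeff_rescale, Algebra.smul_def, Algebra.commutes]

theorem rescaleAlg_X (a : R) : rescaleAlg a (X : K⟦X⟧) = X * C a := by
  ext n
  rw [coeff_rescaleAlg, coeff_X, coeff_mul_C, coeff_X]
  split_ifs with h <;> simp [h]

theorem rescaleAlg_familySum (a : R) (F : ℕ → K⟦X⟧) :
    rescaleAlg a (familySum F) = familySum fun k => rescaleAlg a (F k) := by
  ext n
  simp only [coeff_rescaleAlg, coeff_familySum, sum_smul]

theorem commute_C_rescaleAlg (a : R) (f : K⟦X⟧) : Commute (C a) (rescaleAlg a f) := by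
  ext n
  rw [coeff_C_mul, coeff_mul_C, coeff_rescaleAlg, mul_smul_comm, smul_mul_assoc, ← pow_succ',
    pow_succ]

end RescaleAlg

section OpSeries

variable {K R : Type*} [CommSemiring K] [Semiring R] [Algebra K R] (e : ℕ → Module.End K R)

/-- The operator `∑ₘ Xᵐ e m` on `R⟦X⟧`, each `e m` acting on coefficients. -/
noncomputable def opSeries : Module.End K R⟦X⟧ where
  toFun f := mk fun n => ∑ p ∈ antidiagonal n, e p.1 (coeff p.2 f)
  map_add' f g := by ext n; simp [sum_add_distrib]
  map_smul' c f := by ext n; simp [smul_sum]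

theorem coeff_opSeries (f : R⟦X⟧) (n : ℕ) :
    coeff n (opSeries e f) = ∑ p ∈ antidiagonal n, e p.1 (coeff p.2 f) := by
  simp only [opSeries, LinearMap.coe_mk, AddHom.coe_mk, coeff_mk]

theorem opSeries_C (v : R) : opSeries e (C v) = mk fun n => e n v := by
  ext n
  rw [coeff_opSeries, coeff_mk, sum_eq_single_of_mem (n, 0) (by simp)]
  · simp
  · rintro ⟨p, q⟩ hpq hne
    have hq : q ≠ 0 := by rintro rfl; simp_all
    simp [coeff_C, hq]

theorem opSeries_eq_familySum (f : R⟦X⟧) :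
    opSeries e f = familySum fun m => X ^ m * mk fun n => e m (coeff n f) := by
  ext n
  rw [coeff_opSeries, coeff_familySum, Nat.sum_antidiagonal_eq_sum_range_succ_mk]
  refine sum_congr rfl fun m hm => ?_
  rw [coeff_X_pow_mul', if_pos (by simp at hm; omega), coeff_mk]

/-- Each summand `Xᵐ e m` is a derivation since `X` is central, and `familySum` commutes with
multiplication. -/
theorem opSeries_mul (hLeib : ∀ m v w, e m (v * w) = e m v * w + v * e m w) (f g : R⟦X⟧) :
    opSeries e (f * g) = opSeries e f * g + f * opSeries e g := by
  have hsplit : (fun m => X ^ m * mk fun n => e m (coeff n (f * g))) =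
      (fun m => X ^ m * (mk fun n => e m (coeff n f)) * g) +
        fun m => f * (X ^ m * mk fun n => e m (coeff n g)) := by
    funext m
    have hcoeff : (mk fun n => e m (coeff n (f * g))) =
        (mk fun n => e m (coeff n f)) * g + f * mk fun n => e m (coeff n g) := by
      ext n
      simp [coeff_mul, hLeib, sum_add_distrib]
    rw [hcoeff, Pi.add_apply, mul_add, mul_assoc, (commute_X_pow f m).left_comm]
  rw [opSeries_eq_familySum, hsplit, familySum_add, opSeries_eq_familySum, opSeries_eq_familySum,
    familySum_mul_right (fun m => le_order_X_pow_mul _ m),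
    familySum_mul_left (fun m => le_order_X_pow_mul _ m)]

theorem le_order_opSeries (he : e 0 = 0) {f : R⟦X⟧} {k : ℕ} (hf : ↑k ≤ f.order) :
    ↑(k + 1) ≤ (opSeries e f).order := by
  refine nat_le_order _ _ fun n hn => ?_
  rw [coeff_opSeries]
  refine sum_eq_zero fun ⟨p, q⟩ hpq => ?_
  rcases p with _ | p
  · simp [he]
  · have := mem_antidiagonal.1 hpq
    rw [coeff_of_lt_order q (lt_of_lt_of_le (by simp; omega) hf), map_zero]

theorem coeff_opSeries_pow_C_eq_sum_blocks (he : e 0 = 0) (v : R) (k n : ℕ) :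
    coeff n ((opSeries e ^ k) (C v)) =
      ∑ L ∈ (compositionBlocks n).filter (·.length = k), (L.map e).prod v := by
  induction k generalizing n with
  | zero =>
    have hblocks : (compositionBlocks n).filter (·.length = 0) = if n = 0 then {[]} else ∅ := by
      ext L
      split_ifs with h <;> simp only [mem_filter, mem_compositionBlocks, List.length_eq_zero_iff,
        mem_singleton, notMem_empty, iff_false] <;> aesop
    rw [hblocks, pow_zero, Module.End.one_apply, coeff_C]
    split_ifs <;> simp
  | succ k ih =>
    rw [pow_succ', Module.End.mul_apply, coeff_opSeries]
    simp_rw [ih, map_sum]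
    rw [sum_sigma']
    -- split off the first block; the terms with first block `0` vanish as `e 0 = 0`
    refine sum_bij_ne_zero (fun x _ _ => x.1.1 :: x.2) ?_ ?_ ?_ fun _ _ _ => by simp
    · rintro ⟨⟨p, q⟩, L⟩ hx hne
      simp only [mem_sigma, HasAntidiagonal.mem_antidiagonal, mem_filter,
        mem_compositionBlocks] at hx ⊢
      have hp : p ≠ 0 := by rintro rfl; simp [he] at hne
      refine ⟨⟨fun i hi => ?_, by simp; omega⟩, by simp [hx.2.2]⟩
      rcases List.mem_cons.1 hi with rfl | hi
      · omega
      · exact hx.2.1.1 i hi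
    · rintro ⟨⟨p, q⟩, L⟩ hx - ⟨⟨p', q'⟩, L'⟩ hx' - h
      simp only [mem_sigma, HasAntidiagonal.mem_antidiagonal, mem_filter,
        mem_compositionBlocks] at hx hx'
      simp only [List.cons.injEq] at h
      obtain ⟨rfl, rfl⟩ := h
      obtain rfl : q = q' := by omega
      rfl
    · intro L hL hne
      simp only [mem_filter, mem_compositionBlocks] at hL
      obtain ⟨p, L', rfl⟩ := List.exists_cons_of_length_eq_add_one hL.2
      refine ⟨⟨(p, L'.sum), L'⟩, ?_, by simpa using hne, rfl⟩
      simp only [List.mem_cons, forall_eq_or_imp, List.sum_cons, List.length_cons,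
        add_left_inj] at hL
      simp only [mem_sigma, HasAntidiagonal.mem_antidiagonal, mem_filter, mem_compositionBlocks]
      exact ⟨hL.1.2, ⟨hL.1.1.2, trivial⟩, hL.2⟩

theorem sum_compositions_eq_sum_coeff_opSeries_pow_C (he : e 0 = 0) (f : ℕ → K) (v : R)
    (n : ℕ) : ∑ c : Composition n, f c.length • (c.blocks.map e).prod v =
      ∑ k ∈ range (n + 1), f k • coeff n ((opSeries e ^ k) (C v)) := by
  rw [← sum_fiberwise_of_maps_to (g := Composition.length)
    (fun c _ => mem_range.2 (Nat.lt_succ_of_le c.length_le))]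
  refine sum_congr rfl fun k _ => ?_
  rw [coeff_opSeries_pow_C_eq_sum_blocks e he, compositionBlocks, filter_map, sum_map, smul_sum]
  refine sum_congr rfl fun c hc => ?_
  obtain rfl : c.length = k := (mem_filter.1 hc).2
  rfl

end OpSeries

section OpSeriesRing

variable {K R : Type*} [CommSemiring K] [Ring R] [Algebra K R] {e : ℕ → Module.End K R}

theorem opSeries_rescaleAlg (hLeib : ∀ m v w, e m (v * w) = e m v * w + v * e m w) {a : R}
    (ha : ∀ m, e m a = 0) (f : K⟦X⟧) : opSeries e (rescaleAlg a f) = 0 := by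
  have hpow : ∀ m j, e m (a ^ j) = 0 := by
    intro m j
    induction j with
    | zero => simpa using hLeib m 1 1
    | succ j ih => rw [pow_succ, hLeib, ih, ha, zero_mul, mul_zero, add_zero]
  ext n
  simp [coeff_opSeries, coeff_rescaleAlg, hpow]

theorem opSeries_X (hLeib : ∀ m v w, e m (v * w) = e m v * w + v * e m w) :
    opSeries e (X : R⟦X⟧) = 0 := by
  simpa [rescaleAlg_X] using
    opSeries_rescaleAlg hLeib (a := 1) (fun m => by simpa using hLeib m 1 1) (X : K⟦X⟧)

end OpSeriesRing

theorem eq_of_derivative_eq_mul {k : Type*} [Field k] [CharZero k] {F E G : k⟦X⟧}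
    (hF : d⁄dX k F = F * G) (hE : d⁄dX k E = E * G)
    (h0 : constantCoeff F = constantCoeff E) (hE0 : constantCoeff E ≠ 0) : F = E := by
  have hinv := PowerSeries.mul_inv_cancel E hE0
  have hconst : F * E⁻¹ = 1 := by
    refine derivative.ext ?_ ?_
    · rw [Derivation.leibniz, derivative_inv', hF, hE, Derivation.map_one_eq_zero, smul_eq_mul,
        smul_eq_mul]
      linear_combination (-(F * G * E⁻¹)) * hinv
    · rw [map_mul, constantCoeff_inv, h0, mul_inv_cancel₀ hE0, map_one]
  linear_combination E * hconst - F * hinv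

section CommRing

variable {R : Type*} [CommRing R]

theorem mk_two_pow_mul_one_sub_two_mul_X : (mk fun n => (2 : R) ^ n) * (1 - 2 * X) = 1 := by
  have := congrArg (rescale (2 : R)) (mk_one_mul_one_sub_eq_one (S := R))
  simpa [rescale_mk, rescale_X, map_ofNat] using this

theorem derivative_one_sub_two_mul_X : d⁄dX R (1 - 2 * X : R⟦X⟧) = -2 := by
  ext n
  rcases n with _ | n <;> simp [← map_ofNat (C (R := R)) 2]

theorem derivative_mk_one : d⁄dX R (mk 1 : R⟦X⟧) = mk 1 * mk 1 := by
  have h1 := mk_one_mul_one_sub_eq_one (S := R)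
  have h := congrArg (d⁄dX R) h1
  rw [Derivation.leibniz, map_sub, derivative_X, Derivation.map_one_eq_zero, smul_eq_mul,
    smul_eq_mul] at h
  linear_combination (mk 1 : R⟦X⟧) * h - d⁄dX R (mk 1 : R⟦X⟧) * h1

end CommRing

end PowerSeries

/-- Vanishes at `m = 0` by the convention `x / 0 = 0`. -/
def expWeight (m : ℕ) : ℚ := (2 ^ m - 1) / m

theorem expWeight_zero : expWeight 0 = 0 := by simp [expWeight]

/-- `∑ₘ (2ᵐ - 1)/m Xᵐ = log ((1 - X)/(1 - 2X))`. -/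
noncomputable def expWeightSeries : ℚ⟦X⟧ := PowerSeries.mk expWeight

theorem constantCoeff_expWeightSeries : constantCoeff expWeightSeries = 0 := by
  simp [expWeightSeries, expWeight_zero]

theorem expWeightSeries_eq_X_mul :
    expWeightSeries = X * PowerSeries.mk fun m => expWeight (m + 1) := by
  ext n
  rcases n with _ | n
  · simp [expWeightSeries, expWeight_zero]
  · rw [coeff_succ_X_mul, expWeightSeries, coeff_mk, coeff_mk]

theorem derivative_expWeightSeries :
    d⁄dX ℚ expWeightSeries = 2 * (PowerSeries.mk fun n => (2 : ℚ) ^ n) - PowerSeries.mk 1 := by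
  ext n
  rw [coeff_derivative, expWeightSeries, coeff_mk, expWeight, map_sub, ← map_ofNat (C (R := ℚ)) 2,
    coeff_C_mul, coeff_mk, coeff_mk, Pi.one_apply]
  push_cast
  field_simp
  ring

theorem exp_subst_neg_expWeightSeries :
    (exp ℚ).subst (-expWeightSeries) = (1 - 2 * X) * PowerSeries.mk 1 := by
  have hH : constantCoeff (-expWeightSeries) = 0 := by
    rw [map_neg, constantCoeff_expWeightSeries, neg_zero]
  refine eq_of_derivative_eq_mul (G := -d⁄dX ℚ expWeightSeries) ?_ ?_ ?_
    (by simp [constantCoeff_mk])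
  · rw [derivative_subst (HasSubst.of_constantCoeff_zero' hH), derivative_exp, map_neg]
  · rw [Derivation.leibniz, derivative_mk_one, derivative_expWeightSeries,
      derivative_one_sub_two_mul_X, smul_eq_mul, smul_eq_mul]
    linear_combination (2 * PowerSeries.mk 1) * mk_two_pow_mul_one_sub_two_mul_X (R := ℚ)
  · rw [subst_eq_familySum _ hH, ← coeff_zero_eq_constantCoeff_apply, coeff_familySum]
    simp [constantCoeff_mk]

/-- With `φ(t) = (eᵗ - 1)/t`: `φ(-expWeightSeries) · expWeightSeries / X = 1/(1 - X)`. -/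
theorem subst_expWeightSeries_mul :
    (PowerSeries.mk fun i => ((i + 1).factorial : ℚ)⁻¹).subst (-expWeightSeries) *
      (PowerSeries.mk fun m => expWeight (m + 1)) = PowerSeries.mk 1 := by
  have hH : HasSubst (-expWeightSeries) := HasSubst.of_constantCoeff_zero' <| by
    rw [map_neg, constantCoeff_expWeightSeries, neg_zero]
  have hφ : (PowerSeries.mk fun i => ((i + 1).factorial : ℚ)⁻¹) * X = exp ℚ - 1 := by
    ext n
    rcases n with _ | n <;> simp [coeff_succ_mul_X, coeff_exp]
  have h := congrArg (substAlgHom hH) hφ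
  rw [map_mul, map_sub, map_one, substAlgHom_X, coe_substAlgHom, exp_subst_neg_expWeightSeries] at h
  refine X_mul_cancel ?_
  linear_combination -h - (PowerSeries.mk fun i => ((i + 1).factorial : ℚ)⁻¹).subst
    (-expWeightSeries) * expWeightSeries_eq_X_mul - mk_one_mul_one_sub_eq_one (S := ℚ)

/-- The derivations `∂ₙ`, `n ≥ 1`, of `ℌ = ℚ⟨x,y⟩`. -/
structure IsIKZDerivations (d : ℕ → Module.End ℚ (FreeAlgebra ℚ (Fin 2))) : Prop where
  leibniz : ∀ n v w, d n (v * w) = d n v * w + v * d n w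
  map_x : ∀ n, 1 ≤ n → d n Hx = Hx * (Hx + Hy) ^ (n - 1) * Hy
  map_y : ∀ n, 1 ≤ n → d n Hy = -(Hx * (Hx + Hy) ^ (n - 1) * Hy)

namespace IKZ

local notation "ℌ" => FreeAlgebra ℚ (Fin 2)

variable {d : ℕ → Module.End ℚ ℌ}

/-- `D = ∑ₘ (2ᵐ - 1)/m ∂ₘ uᵐ` on `ℌ⟦u⟧`. -/
noncomputable def flow (d : ℕ → Module.End ℚ ℌ) : Module.End ℚ ℌ⟦X⟧ :=
  opSeries fun m => expWeight m • d m

/-- `G = ∑ₘ (2ᵐ - 1)/m (x + y)ᵐ⁻¹ uᵐ`, so that `D x = x G y`. -/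
noncomputable def kernel : ℌ⟦X⟧ :=
  X * rescaleAlg (Hx + Hy) (PowerSeries.mk fun m => expWeight (m + 1))

noncomputable def exponent : ℌ⟦X⟧ := rescaleAlg (Hx + Hy) expWeightSeries

theorem kernel_mul_C : kernel * C (Hx + Hy) = exponent := by
  rw [kernel, exponent, expWeightSeries_eq_X_mul, map_mul, rescaleAlg_X, mul_assoc, mul_assoc,
    (commute_C_rescaleAlg _ _).eq]

theorem coeff_succ_kernel (n : ℕ) :
    coeff (n + 1) kernel = expWeight (n + 1) • (Hx + Hy) ^ n := by
  rw [kernel, coeff_succ_X_mul, coeff_rescaleAlg, coeff_mk]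

theorem constantCoeff_kernel : constantCoeff kernel = 0 := by
  simp [kernel]

theorem one_le_order_kernel_mul_C : 1 ≤ (kernel * C Hy).order := by
  rw [kernel, mul_assoc, ← pow_one X]
  exact le_order_X_pow_mul _ 1

theorem flow_C_x (hd : IsIKZDerivations d) : flow d (C Hx) = C Hx * kernel * C Hy := by
  ext n
  rw [flow, opSeries_C, coeff_mk, coeff_mul_C, coeff_C_mul]
  rcases n with _ | n
  · simp [expWeight_zero, constantCoeff_kernel]
  · rw [LinearMap.smul_apply, hd.map_x _ n.succ_pos, coeff_succ_kernel, Nat.succ_sub_one,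
      mul_smul_comm, smul_mul_assoc]

theorem flow_C_y (hd : IsIKZDerivations d) : flow d (C Hy) = -(C Hx * kernel * C Hy) := by
  ext n
  rw [flow, opSeries_C, coeff_mk, map_neg, coeff_mul_C, coeff_C_mul]
  rcases n with _ | n
  · simp [expWeight_zero, constantCoeff_kernel]
  · rw [LinearMap.smul_apply, hd.map_y _ n.succ_pos, coeff_succ_kernel, Nat.succ_sub_one,
      mul_smul_comm, smul_mul_assoc, smul_neg]

theorem weighted_leibniz (hd : IsIKZDerivations d) (m : ℕ) (v w : ℌ) :
    (expWeight m • d m) (v * w) = (expWeight m • d m) v * w + v * (expWeight m • d m) w := by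
  simp [hd.leibniz, smul_add]

theorem flow_mul (hd : IsIKZDerivations d) (f g : ℌ⟦X⟧) :
    flow d (f * g) = flow d f * g + f * flow d g :=
  opSeries_mul _ (weighted_leibniz hd) f g

theorem flow_rescaleAlg (hd : IsIKZDerivations d) (f : ℚ⟦X⟧) :
    flow d (rescaleAlg (Hx + Hy) f) = 0 := by
  refine opSeries_rescaleAlg (weighted_leibniz hd) (fun m => ?_) f
  rcases m with _ | m
  · simp [expWeight_zero]
  · simp [hd.map_x _ m.succ_pos, hd.map_y _ m.succ_pos]

theorem flow_one (hd : IsIKZDerivations d) : flow d 1 = 0 := by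
  simpa using flow_rescaleAlg hd 1

theorem flow_kernel (hd : IsIKZDerivations d) : flow d kernel = 0 := by
  rw [kernel, flow_mul hd, flow, opSeries_X (weighted_leibniz hd), ← flow, flow_rescaleAlg hd,
    zero_mul, mul_zero, add_zero]

theorem flow_kernel_mul_C_y (hd : IsIKZDerivations d) :
    flow d (kernel * C Hy) = (kernel * C Hy - exponent) * (kernel * C Hy) := by
  rw [flow_mul hd, flow_kernel hd, flow_C_y hd, ← kernel_mul_C, map_add]
  noncomm_ring

noncomputable def flowTerm (d : ℕ → Module.End ℚ ℌ) : ℕ → ℌ⟦X⟧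
  | 0 => 1
  | k + 1 => ((k + 1 : ℕ) : ℚ)⁻¹ • (kernel * C Hy * flowTerm d k + flow d (flowTerm d k))

theorem C_x_mul_flowTerm (hd : IsIKZDerivations d) (k : ℕ) :
    C Hx * flowTerm d k = (k.factorial : ℚ)⁻¹ • (flow d ^ k) (C Hx) := by
  induction k with
  | zero => simp [flowTerm]
  | succ k ih =>
    have hk : (flow d ^ k) (C Hx) = (k.factorial : ℚ) • (C Hx * flowTerm d k) := by
      rw [ih, smul_smul, mul_inv_cancel₀ (by positivity), one_smul]
    have hfact : ((k + 1).factorial : ℚ)⁻¹ * k.factorial = ((k + 1 : ℕ) : ℚ)⁻¹ := by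
      rw [Nat.factorial_succ, Nat.cast_mul, mul_inv, mul_assoc, inv_mul_cancel₀ (by positivity),
        mul_one]
    rw [pow_succ', Module.End.mul_apply, hk, map_smul, flow_mul hd, flow_C_x hd, smul_smul, hfact,
      flowTerm, mul_smul_comm, mul_add, mul_assoc, mul_assoc, mul_assoc]

theorem flow_flowTerm (k : ℕ) : flow d (flowTerm d k) =
    ((k + 1 : ℕ) : ℚ) • flowTerm d (k + 1) - kernel * C Hy * flowTerm d k := by
  rw [flowTerm, smul_smul, mul_inv_cancel₀ (by positivity), one_smul, add_sub_cancel_left]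

theorem le_order_flowTerm (k : ℕ) : ↑k ≤ (flowTerm d k).order := by
  induction k with
  | zero => simp
  | succ k ih =>
    refine le_trans ?_ (le_order_smul_of_algebra _ _)
    refine le_trans (le_min ?_ ?_) (min_order_le_order_add _ _)
    · rw [Nat.cast_succ, add_comm]
      exact (add_le_add one_le_order_kernel_mul_C ih).trans (le_order_mul _ _)
    · exact le_order_opSeries _ (by simp [expWeight_zero]) ih

/-- The terms of `φ(-exponent)`, `φ(t) = (eᵗ - 1)/t`. -/
noncomputable def phiTerm (i : ℕ) : ℌ⟦X⟧ := ((i + 1).factorial : ℚ)⁻¹ • (-exponent) ^ i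

theorem phiTerm_zero : phiTerm 0 = 1 := by simp [phiTerm]

theorem phiTerm_eq_rescaleAlg (i : ℕ) :
    phiTerm i = rescaleAlg (Hx + Hy) (((i + 1).factorial : ℚ)⁻¹ • (-expWeightSeries) ^ i) := by
  rw [phiTerm, exponent, ← map_neg, ← map_pow]
  ext n
  simp only [coeff_smul, coeff_rescaleAlg, smul_smul, smul_eq_mul]

theorem le_order_phiTerm (i : ℕ) : ↑i ≤ (phiTerm i).order := by
  refine le_trans ?_ (le_order_smul_of_algebra _ _)
  refine le_order_pow_of_constantCoeff_eq_zero i ?_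
  rw [map_neg, neg_eq_zero, ← coeff_zero_eq_constantCoeff_apply, exponent, coeff_rescaleAlg,
    coeff_zero_eq_constantCoeff_apply, constantCoeff_expWeightSeries, zero_smul]

theorem flow_phiTerm (hd : IsIKZDerivations d) (i : ℕ) : flow d (phiTerm i) = 0 := by
  rw [phiTerm_eq_rescaleAlg, flow_rescaleAlg hd]

theorem phiTerm_mul_exponent (i : ℕ) :
    phiTerm i * exponent = -(((i + 2 : ℕ) : ℚ) • phiTerm (i + 1)) := by
  have hfact : ((i + 2 : ℕ) : ℚ) * ((i + 2).factorial : ℚ)⁻¹ = ((i + 1).factorial : ℚ)⁻¹ := by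
    rw [Nat.factorial_succ (i + 1), Nat.cast_mul, mul_inv, ← mul_assoc,
      mul_inv_cancel₀ (by positivity), one_mul]
  rw [phiTerm, phiTerm, smul_smul, hfact, smul_mul_assoc, ← smul_neg, pow_succ, mul_neg, neg_neg]

theorem flow_phiTerm_mul_mul_flowTerm (hd : IsIKZDerivations d) (i j : ℕ) :
    flow d (phiTerm i * (kernel * C Hy) * flowTerm d j) =
      ((i : ℚ) + 2) • (phiTerm (i + 1) * (kernel * C Hy) * flowTerm d j) +
        ((j : ℚ) + 1) • (phiTerm i * (kernel * C Hy) * flowTerm d (j + 1)) := by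
  rw [flow_mul hd, flow_mul hd, flow_phiTerm hd, flow_kernel_mul_C_y hd, flow_flowTerm]
  have h := phiTerm_mul_exponent i
  push_cast at h ⊢
  simp only [zero_mul, zero_add, mul_sub, sub_mul, ← mul_assoc, h, mul_smul_comm, smul_mul_assoc,
    neg_mul]
  abel

theorem flowTerm_succ (hd : IsIKZDerivations d) (k : ℕ) :
    flowTerm d (k + 1) =
      ∑ p ∈ antidiagonal k, phiTerm p.1 * (kernel * C Hy) * flowTerm d p.2 := by
  induction k with
  | zero => simp [flowTerm, phiTerm_zero, flow_one hd]
  | succ k ih =>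
    have hflow : flow d (flowTerm d (k + 1)) = ∑ p ∈ antidiagonal k,
        (((p.1 : ℚ) + 2) • (phiTerm (p.1 + 1) * (kernel * C Hy) * flowTerm d p.2) +
          ((p.2 : ℚ) + 1) • (phiTerm p.1 * (kernel * C Hy) * flowTerm d (p.2 + 1))) := by
      rw [ih, map_sum]
      exact sum_congr rfl fun p _ => flow_phiTerm_mul_mul_flowTerm hd p.1 p.2
    -- the weight `k + 2` of the pair `(i, j)` splits as `(i + 1) + j`
    have key : kernel * C Hy * flowTerm d (k + 1) + flow d (flowTerm d (k + 1)) =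
        ((k + 2 : ℕ) : ℚ) • ∑ p ∈ antidiagonal (k + 1),
          phiTerm p.1 * (kernel * C Hy) * flowTerm d p.2 := by
      calc _ = ∑ p ∈ antidiagonal (k + 1), ((p.1 : ℚ) + 1) •
              (phiTerm p.1 * (kernel * C Hy) * flowTerm d p.2) +
            ∑ p ∈ antidiagonal (k + 1), (p.2 : ℚ) •
              (phiTerm p.1 * (kernel * C Hy) * flowTerm d p.2) := by
            rw [hflow, Nat.sum_antidiagonal_succ, Nat.sum_antidiagonal_succ', sum_add_distrib]
            push_cast
            simp only [phiTerm_zero, one_mul, zero_add, zero_smul, one_smul, add_assoc,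
              one_add_one_eq_two]
        _ = _ := by
          rw [← sum_add_distrib, smul_sum]
          refine sum_congr rfl fun p hp => ?_
          rw [← add_smul]
          congr 1
          have : (p.1 : ℚ) + p.2 = k + 1 := by exact_mod_cast mem_antidiagonal.1 hp
          push_cast
          linarith
    rw [flowTerm, key, smul_smul, inv_mul_cancel₀ (by positivity), one_smul]

theorem familySum_phiTerm_mul_kernel :
    familySum phiTerm * kernel = X * rescaleAlg (Hx + Hy) (PowerSeries.mk 1 : ℚ⟦X⟧) := by
  have hφ : familySum phiTerm = rescaleAlg (Hx + Hy)
      ((PowerSeries.mk fun i => ((i + 1).factorial : ℚ)⁻¹).subst (-expWeightSeries)) := by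
    rw [subst_eq_familySum _ (by rw [map_neg, constantCoeff_expWeightSeries, neg_zero]),
      rescaleAlg_familySum]
    congr 1
    funext i
    rw [phiTerm_eq_rescaleAlg, coeff_mk]
  rw [hφ, kernel, ← mul_assoc, (commute_X _).eq, mul_assoc, ← map_mul, subst_expWeightSeries_mul]

theorem familySum_flowTerm (hd : IsIKZDerivations d) :
    familySum (flowTerm d) =
      1 + X * rescaleAlg (Hx + Hy) (PowerSeries.mk 1 : ℚ⟦X⟧) * C Hy * familySum (flowTerm d) := by
  have hφs : ∀ i : ℕ, ↑i ≤ (phiTerm i * (kernel * C Hy)).order := fun i =>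
    (le_order_phiTerm i).trans (le_self_add.trans (le_order_mul _ _))
  conv_lhs => rw [familySum_eq_add_familySum_succ le_order_flowTerm]
  simp_rw [flowTerm_succ hd]
  rw [← familySum_mul hφs le_order_flowTerm, ← familySum_mul_right le_order_phiTerm, ← mul_assoc,
    familySum_phiTerm_mul_kernel]
  rfl

/-- Multiplying the equation of `familySum_flowTerm` by `1 - (x + y) u` gives a two-term
recursion. -/
theorem coeff_succ_familySum_flowTerm (hd : IsIKZDerivations d) (m : ℕ) :
    coeff (m + 1) (familySum (flowTerm d)) =
      (Hx + 2 * Hy) * coeff m (familySum (flowTerm d)) - if m = 0 then Hx + Hy else 0 := by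
  have hgeom : (1 - X * C (Hx + Hy)) * rescaleAlg (Hx + Hy) (PowerSeries.mk 1 : ℚ⟦X⟧) = 1 := by
    have := congrArg (rescaleAlg (Hx + Hy)) (mk_one_mul_one_sub_eq_one (S := ℚ))
    rwa [mul_comm, map_mul, map_sub, map_one, rescaleAlg_X] at this
  have h : (1 - X * C (Hx + Hy)) * familySum (flowTerm d) =
      1 - X * C (Hx + Hy) + X * C Hy * familySum (flowTerm d) := by
    conv_lhs => rw [familySum_flowTerm hd]
    rw [mul_add, mul_one, ← mul_assoc, ← mul_assoc, ← mul_assoc, (commute_X _).eq, mul_assoc X,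
      hgeom, mul_one]
  have hc := congrArg (coeff (m + 1)) h
  simp only [sub_mul, one_mul, mul_assoc, map_sub, map_add, add_mul, coeff_succ_X_mul,
    coeff_C_mul, coeff_one, coeff_C, Nat.add_one_ne_zero, if_false] at hc
  rw [sub_eq_iff_eq_add] at hc
  rw [hc]
  split_ifs <;> noncomm_ring

theorem coeff_familySum_flowTerm (hd : IsIKZDerivations d) {n : ℕ} (hn : 1 ≤ n) :
    coeff n (familySum (flowTerm d)) = (Hx + 2 * Hy) ^ (n - 1) * Hy := by
  obtain ⟨m, rfl⟩ : ∃ m, n = m + 1 := ⟨n - 1, by omega⟩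
  induction m with
  | zero =>
    rw [coeff_succ_familySum_flowTerm hd, coeff_familySum]
    simp only [zero_add, range_one, sum_singleton, flowTerm, coeff_zero_eq_constantCoeff, map_one,
      mul_one, if_true, Nat.sub_self, pow_zero, one_mul]
    noncomm_ring
  | succ m ih =>
    rw [coeff_succ_familySum_flowTerm hd, ih (by omega), if_neg (by omega), sub_zero,
      Nat.add_sub_cancel, Nat.add_sub_cancel, pow_succ', mul_assoc]

end IKZ

open IKZ in
/-- **Exponential of the weighted derivations applied to `x`.**
Let `∂ₙ` be the derivations on `ℌ = ℚ⟨x,y⟩` with `∂ₙ(x) = x(x+y)^{n-1}y` and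
`∂ₙ(y) = -x(x+y)^{n-1}y`.  Then applying the operator exponential
`exp(∑_{n≥1} (2ⁿ-1)(∂ₙ/n)uⁿ)` to `x` yields `x + ∑_{n≥1} x(x+2y)^{n-1}y·uⁿ`;
concretely, for `n ≥ 1` the coefficient of `uⁿ`, which is the sum over all
compositions `(m₁,…,m_k)` of `n` of
`(1/k!)·((2^{m₁}-1)/m₁)⋯((2^{m_k}-1)/m_k)·(∂_{m₁}∘⋯∘∂_{m_k})(x)`,
equals `x(x+2y)^{n-1}y`. -/
theorem exp_weighted_derivations_on_x
    (d : ℕ → Module.End ℚ (FreeAlgebra ℚ (Fin 2)))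
    (hLeib : ∀ n : ℕ, ∀ v w : FreeAlgebra ℚ (Fin 2),
      d n (v * w) = d n v * w + v * d n w)
    (hdx : ∀ n : ℕ, 1 ≤ n → d n Hx = Hx * (Hx + Hy) ^ (n - 1) * Hy)
    (hdy : ∀ n : ℕ, 1 ≤ n → d n Hy = -(Hx * (Hx + Hy) ^ (n - 1) * Hy))
    (n : ℕ) (hn : 1 ≤ n) :
    ∑ c : Composition n,
        (((c.length.factorial : ℚ))⁻¹ : ℚ) •
          ((c.blocks.map (fun m : ℕ => ((2 ^ m - 1 : ℚ) / (m : ℚ)) • d m)).prod Hx)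
      = Hx * (Hx + 2 * Hy) ^ (n - 1) * Hy := by
  have hd : IsIKZDerivations d := ⟨hLeib, hdx, hdy⟩
  calc _ = ∑ k ∈ range (n + 1), (k.factorial : ℚ)⁻¹ • coeff n ((flow d ^ k) (C Hx)) :=
        sum_compositions_eq_sum_coeff_opSeries_pow_C _ (by simp [expWeight_zero]) _ Hx n
    _ = Hx * coeff n (familySum (flowTerm d)) := by
        rw [coeff_familySum, mul_sum]
        refine sum_congr rfl fun k _ => ?_
        rw [← coeff_C_mul, C_x_mul_flowTerm hd, coeff_smul]
    _ = _ := by rw [coeff_familySum_flowTerm hd hn, mul_assoc]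
end
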